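/- arXiv:2112.13902 — 2 statements merged into one kernel-verified Lean document; each statement's English description precedes it below -/
import Mathlib

section
/- There exists a universal constant C > 0 such that the following holds. Let n ≥ 1, d ≥ 1, let P be a polynomial of degree at most d on {-1,1}^n, let X be uniformly distributed on {-1,1}^n, and for r > 0 let a_r be an e^{-r}-quantile of P(X). Then for all r ≥ 1, a_r - a_1 ≤ C^d · (r/d + 1)^{d/2} · (E|P(X)|^2)^{1/2}. -/
open Classical

/-- Expectation with respect to the uniform measure on the discrete cube `{-1,1}^n`,
encoded as `Fin n → Bool` (`true ↦ 1`, `false ↦ -1`). -/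
noncomputable def cubeE (n : ℕ) (f : (Fin n → Bool) → ℝ) : ℝ :=
  (∑ x : Fin n → Bool, f x) / 2 ^ n

/-- The real value of a coordinate of the cube: `true ↦ 1`, `false ↦ -1`. -/
def cubeSign (b : Bool) : ℝ := if b then 1 else -1

/-- `P` is (the restriction to the cube of) a multilinear polynomial of degree at most `d`:
`P x = ∑_{#S ≤ d} a_S ∏_{i ∈ S} x_i`. -/
def IsPolyDeg (n d : ℕ) (P : (Fin n → Bool) → ℝ) : Prop :=
  ∃ a : Finset (Fin n) → ℝ,
    (∀ S : Finset (Fin n), d < S.card → a S = 0) ∧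
    ∀ x, P x = ∑ S : Finset (Fin n), a S * ∏ i ∈ S, cubeSign (x i)

/-- Probability (uniform measure) of a set of points of the cube. -/
noncomputable def cubePr (n : ℕ) (A : Set (Fin n → Bool)) : ℝ :=
  (∑ x : Fin n → Bool, if x ∈ A then (1 : ℝ) else 0) / 2 ^ n

/-- `a` is an `e^{-r}`-quantile of `P(X)`:
`ℙ(P(X) ≥ a) ≥ e^{-r}` and `ℙ(P(X) ≤ a) ≥ 1 - e^{-r}`. -/
def IsQuantile (n : ℕ) (P : (Fin n → Bool) → ℝ) (r a : ℝ) : Prop :=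
  Real.exp (-r) ≤ cubePr n {x | a ≤ P x} ∧ 1 - Real.exp (-r) ≤ cubePr n {x | P x ≤ a}

/-- Discrete partial derivative: `∂_i f(x) = (f(T_i^1 x) - f(T_i^{-1} x))/2`. -/
noncomputable def discDeriv (n : ℕ) (f : (Fin n → Bool) → ℝ) (i : Fin n)
    (x : Fin n → Bool) : ℝ :=
  (f (Function.update x i true) - f (Function.update x i false)) / 2

/-- Squared norm of the discrete gradient: `|∇f(x)|² = ∑_i |∂_i f(x)|²`. -/
noncomputable def gradSq (n : ℕ) (f : (Fin n → Bool) → ℝ) (x : Fin n → Bool) : ℝ :=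
  ∑ i : Fin n, (discDeriv n f i x) ^ 2

open Finset

/-!
Bonami's moment inequality `𝔼 P^{2k} ≤ ((2k)^d 𝔼 P²)^k` is proved by induction on the dimension:
writing `P(b, y) = Q(y) + b R(y)` with `deg Q ≤ d`, `deg R ≤ d - 1`, the two-point inequality
`((a + b)^{2k} + (a - b)^{2k}) / 2 ≤ (a² + 2k b²)^k` and Minkowski's inequality in `L^k` give
`𝔼 P^{2k} ≤ ((2k)^d 𝔼 Q² + (2k)^d 𝔼 R²)^k = ((2k)^d 𝔼 P²)^k`.
Markov's inequality for `P^{2k}` with `k ≈ r/d` then puts the `e^{-r}`-quantile below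
`8^d (r/d + 1)^{d/2} ‖P‖₂`, and Chebyshev's inequality puts the `e^{-1}`-quantile above `-2‖P‖₂`.
-/

lemma Nat.choose_two_mul_two_mul_le (k j : ℕ) :
    (2 * k).choose (2 * j) ≤ k.choose j * (2 * k) ^ j := by
  induction j with
  | zero => simp
  | succ j ih =>
    have hodd := Nat.choose_succ_right_eq (2 * k) (2 * j)
    have heven := Nat.choose_succ_right_eq (2 * k) (2 * j + 1)
    have hk := Nat.choose_succ_right_eq k j
    refine Nat.le_of_mul_le_mul_right (c := (2 * j + 2) * (2 * j + 1)) ?_ (by positivity)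
    calc (2 * k).choose (2 * (j + 1)) * ((2 * j + 2) * (2 * j + 1))
        = (2 * k).choose (2 * j) * (2 * k - 2 * j) * (2 * k - (2 * j + 1)) := by
          rw [show 2 * (j + 1) = 2 * j + 1 + 1 by ring, ← mul_assoc, heven, mul_right_comm, hodd]
      _ ≤ k.choose j * (2 * k) ^ j * (2 * (k - j)) * (2 * k * (2 * j + 1)) := by
          gcongr
          · omega
          · exact (Nat.sub_le _ _).trans (Nat.le_mul_of_pos_right _ (by omega))
      _ = k.choose (j + 1) * (2 * k) ^ (j + 1) * ((2 * j + 2) * (2 * j + 1)) := by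
          rw [pow_succ]
          linear_combination (2 * k) ^ j * (2 * k) * (2 * (2 * j + 1)) * hk.symm

lemma Finset.sum_range_two_mul_add_one {M : Type*} [AddCommMonoid M] (g : ℕ → M) (k : ℕ) :
    ∑ m ∈ range (2 * k + 1), g m
      = ∑ j ∈ range (k + 1), g (2 * j) + ∑ j ∈ range k, g (2 * j + 1) := by
  induction k with
  | zero => simp
  | succ k ih =>
    rw [show 2 * (k + 1) + 1 = 2 * k + 1 + 1 + 1 by ring, sum_range_succ, sum_range_succ, ih]
    simp only [sum_range_succ, mul_add, mul_one]
    abel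

lemma add_pow_two_mul_add_sub_pow_two_mul (a b : ℝ) (k : ℕ) :
    (a + b) ^ (2 * k) + (a - b) ^ (2 * k)
      = 2 * ∑ j ∈ range (k + 1), (b ^ 2) ^ j * (a ^ 2) ^ (k - j) * ((2 * k).choose (2 * j) : ℝ) :=
        by
  rw [add_comm a b, sub_eq_neg_add, add_pow, add_pow, ← sum_add_distrib,
    sum_range_two_mul_add_one, mul_sum]
  have hodd : ∀ j, b ^ (2 * j + 1) * a ^ (2 * k - (2 * j + 1)) * ((2 * k).choose (2 * j + 1) : ℝ)
      + (-b) ^ (2 * j + 1) * a ^ (2 * k - (2 * j + 1)) * ((2 * k).choose (2 * j + 1) : ℝ) = 0 := by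
    intro j; rw [Odd.neg_pow ⟨j, rfl⟩]; ring
  simp only [hodd, sum_const_zero, add_zero]
  refine sum_congr rfl fun j _ => ?_
  rw [Even.neg_pow ⟨j, two_mul j⟩, ← pow_mul, ← pow_mul, show 2 * k - 2 * j = 2 * (k - j) by omega]
  ring

lemma add_pow_two_mul_add_sub_pow_two_mul_le (a b : ℝ) (k : ℕ) :
    ((a + b) ^ (2 * k) + (a - b) ^ (2 * k)) / 2 ≤ (a ^ 2 + 2 * k * b ^ 2) ^ k := by
  rw [add_pow_two_mul_add_sub_pow_two_mul, add_comm (a ^ 2), add_pow,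
    mul_div_cancel_left₀ _ two_ne_zero]
  refine sum_le_sum fun j _ => ?_
  have hchoose : ((2 * k).choose (2 * j) : ℝ) ≤ k.choose j * (2 * k) ^ j := by
    exact_mod_cast Nat.choose_two_mul_two_mul_le k j
  calc (b ^ 2) ^ j * (a ^ 2) ^ (k - j) * ((2 * k).choose (2 * j) : ℝ)
      ≤ (b ^ 2) ^ j * (a ^ 2) ^ (k - j) * (k.choose j * (2 * k) ^ j) := by gcongr
    _ = (2 * k * b ^ 2) ^ j * (a ^ 2) ^ (k - j) * k.choose j := by ring

lemma sum_add_pow_le_of_sum_pow_le {ι : Type*} (s : Finset ι) {k : ℕ} (hk : 1 ≤ k)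
    {f g : ι → ℝ} (hf : ∀ i ∈ s, 0 ≤ f i) (hg : ∀ i ∈ s, 0 ≤ g i) {N α β : ℝ} (hN : 0 ≤ N)
    (hα : 0 ≤ α) (hβ : 0 ≤ β) (hfα : ∑ i ∈ s, f i ^ k ≤ N * α ^ k)
    (hgβ : ∑ i ∈ s, g i ^ k ≤ N * β ^ k) :
    ∑ i ∈ s, (f i + g i) ^ k ≤ N * (α + β) ^ k := by
  have hk₀ : k ≠ 0 := by omega
  have hq : (0 : ℝ) < (k : ℝ)⁻¹ := by positivity
  have root : ∀ γ : ℝ, 0 ≤ γ → (N * γ ^ k) ^ (k : ℝ)⁻¹ = N ^ (k : ℝ)⁻¹ * γ := fun γ hγ => by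
    rw [Real.mul_rpow hN (by positivity), Real.pow_rpow_inv_natCast hγ hk₀]
  have hsum : ∀ h : ι → ℝ, (∀ i ∈ s, 0 ≤ h i) → 0 ≤ ∑ i ∈ s, h i ^ k := fun h hh =>
    sum_nonneg fun i hi => pow_nonneg (hh i hi) k
  have minkowski := Real.Lp_add_le_of_nonneg (p := k) (s := s) (by exact_mod_cast hk) hf hg
  simp only [Real.rpow_natCast, one_div] at minkowski
  rw [← Real.rpow_le_rpow_iff (hsum _ fun i hi => add_nonneg (hf i hi) (hg i hi))
    (by positivity) hq, root _ (add_nonneg hα hβ), mul_add, ← root α hα, ← root β hβ]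
  exact minkowski.trans (add_le_add (Real.rpow_le_rpow (hsum f hf) hfα hq.le)
    (Real.rpow_le_rpow (hsum g hg) hgβ hq.le))

lemma Fin.sum_finset_succ {M : Type*} [AddCommMonoid M] {n : ℕ} (f : Finset (Fin (n + 1)) → M) :
    ∑ S, f S = ∑ T : Finset (Fin n), f (T.map (Fin.succEmb n))
      + ∑ T : Finset (Fin n), f (insert 0 (T.map (Fin.succEmb n))) := by
  have h0 : (0 : Fin (n + 1)) ∉ univ.map (Fin.succEmb n) := by simp [Fin.succ_ne_zero]
  have huniv : (univ : Finset (Fin (n + 1))) = insert 0 (univ.map (Fin.succEmb n)) := by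
    rw [Fin.univ_succ, cons_eq_insert]; rfl
  have hpow : (univ.map (Fin.succEmb n)).powerset
      = univ.map (mapEmbedding (Fin.succEmb n)).toEmbedding := by
    ext S
    simp [subset_map_iff, mapEmbedding_apply, eq_comm]
  rw [← powerset_univ, huniv, sum_powerset_insert h0, hpow, sum_map, sum_map]
  rfl

section Cube

variable {n d : ℕ} {P : (Fin n → Bool) → ℝ}

lemma IsPolyDeg.exists_const (hP : IsPolyDeg n 0 P) : ∃ c, ∀ x, P x = c := by
  obtain ⟨a, ha, hPa⟩ := hP
  refine ⟨a ∅, fun x => ?_⟩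
  rw [hPa, sum_eq_single ∅ (fun S _ hS => by rw [ha S (card_pos.2 (nonempty_iff_ne_empty.2 hS)),
    zero_mul]) (by simp)]
  simp

lemma IsPolyDeg.exists_cons_eq {P : (Fin (n + 1) → Bool) → ℝ} (hP : IsPolyDeg (n + 1) (d + 1) P) :
    ∃ Q R, IsPolyDeg n (d + 1) Q ∧ IsPolyDeg n d R ∧
      ∀ b y, P (Fin.cons b y) = Q y + cubeSign b * R y := by
  obtain ⟨a, ha, hPa⟩ := hP
  have h0 : ∀ T : Finset (Fin n), (0 : Fin (n + 1)) ∉ T.map (Fin.succEmb n) := by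
    simp [Fin.succ_ne_zero]
  refine ⟨fun y => ∑ T, a (T.map (Fin.succEmb n)) * ∏ i ∈ T, cubeSign (y i),
    fun y => ∑ T, a (insert 0 (T.map (Fin.succEmb n))) * ∏ i ∈ T, cubeSign (y i),
    ⟨_, fun T hT => ha _ (by rwa [card_map]), fun _ => rfl⟩,
    ⟨_, fun T hT => ha _ (by rw [card_insert_of_notMem (h0 T), card_map]; omega), fun _ => rfl⟩,
    fun b y => ?_⟩
  rw [hPa, Fin.sum_finset_succ, mul_sum]
  congr 1 <;> refine sum_congr rfl fun T _ => ?_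
  · simp [prod_map]
  · rw [prod_insert (h0 T), prod_map]
    simp only [Fin.coe_succEmb, Fin.cons_zero, Fin.cons_succ]
    ring

lemma cubeE_nonneg {f : (Fin n → Bool) → ℝ} (hf : ∀ x, 0 ≤ f x) : 0 ≤ cubeE n f :=
  div_nonneg (sum_nonneg fun x _ => hf x) (by positivity)

lemma cubeE_mono {f g : (Fin n → Bool) → ℝ} (h : ∀ x, f x ≤ g x) : cubeE n f ≤ cubeE n g :=
  div_le_div_of_nonneg_right (sum_le_sum fun x _ => h x) (by positivity)

lemma cubeE_add (f g : (Fin n → Bool) → ℝ) :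
    cubeE n (fun x => f x + g x) = cubeE n f + cubeE n g := by
  rw [cubeE, sum_add_distrib, add_div]; rfl

lemma cubeE_const_mul (c : ℝ) (f : (Fin n → Bool) → ℝ) :
    cubeE n (fun x => c * f x) = c * cubeE n f := by
  rw [cubeE, ← mul_sum, mul_div_assoc]; rfl

lemma cubeE_const (c : ℝ) : cubeE n (fun _ => c) = c := by
  simp [cubeE]

lemma cubeE_succ (f : (Fin (n + 1) → Bool) → ℝ) :
    cubeE (n + 1) f = cubeE n fun y => (f (Fin.cons true y) + f (Fin.cons false y)) / 2 := by
  rw [cubeE, cubeE, ← (Fin.consEquiv fun _ => Bool).sum_comp, Fintype.sum_prod_type_right,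
    ← sum_div, pow_succ', div_div]
  simp [Fin.consEquiv]

lemma cubeE_add_pow_le {k : ℕ} (hk : 1 ≤ k) {F G : (Fin n → Bool) → ℝ} (hF : ∀ x, 0 ≤ F x)
    (hG : ∀ x, 0 ≤ G x) {α β : ℝ} (hα : 0 ≤ α) (hβ : 0 ≤ β)
    (hFα : cubeE n (fun x => F x ^ k) ≤ α ^ k) (hGβ : cubeE n (fun x => G x ^ k) ≤ β ^ k) :
    cubeE n (fun x => (F x + G x) ^ k) ≤ (α + β) ^ k := by
  simp only [cubeE, div_le_iff₀ (by positivity : (0 : ℝ) < 2 ^ n), mul_comm _ ((2 : ℝ) ^ n)]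
    at hFα hGβ ⊢
  exact sum_add_pow_le_of_sum_pow_le _ hk (fun x _ => hF x) (fun x _ => hG x) (by positivity)
    hα hβ hFα hGβ

lemma cubeE_pow_two_mul_le_of_const {k : ℕ} (hk : 1 ≤ k) {c : ℝ} (hP : ∀ x, P x = c) :
    cubeE n (fun x => P x ^ (2 * k)) ≤ ((2 * k) ^ d * cubeE n (fun x => P x ^ 2)) ^ k := by
  simp only [hP, cubeE_const, pow_mul]
  have : (1 : ℝ) ≤ 2 * k := by norm_cast; omega
  gcongr
  exact le_mul_of_one_le_left (sq_nonneg c) (one_le_pow₀ this)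

theorem IsPolyDeg.cubeE_pow_two_mul_le (hP : IsPolyDeg n d P) {k : ℕ} (hk : 1 ≤ k) :
    cubeE n (fun x => P x ^ (2 * k)) ≤ ((2 * k) ^ d * cubeE n (fun x => P x ^ 2)) ^ k := by
  induction n generalizing d with
  | zero => exact cubeE_pow_two_mul_le_of_const hk fun x => congrArg P (Subsingleton.elim x default)
  | succ n ih =>
    cases d with
    | zero =>
      obtain ⟨c, hc⟩ := hP.exists_const
      exact cubeE_pow_two_mul_le_of_const hk hc
    | succ d =>
      obtain ⟨Q, R, hQ, hR, hPQR⟩ := hP.exists_cons_eq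
      have hQR : ∀ y, P (Fin.cons true y) = Q y + R y ∧ P (Fin.cons false y) = Q y - R y := by
        simp [hPQR, cubeSign, sub_eq_add_neg]
      have hP2 : cubeE (n + 1) (fun x => P x ^ 2)
          = cubeE n (fun y => Q y ^ 2) + cubeE n (fun y => R y ^ 2) := by
        rw [cubeE_succ, ← cubeE_add]
        congr 1; funext y; rw [(hQR y).1, (hQR y).2]; ring
      set K : ℝ := 2 * k
      have hQk :
          cubeE n (fun y => (Q y ^ 2) ^ k) ≤ (K ^ (d + 1) * cubeE n fun y => Q y ^ 2) ^ k := by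
        simpa only [← pow_mul] using ih hQ
      have hRk :
          cubeE n (fun y => (K * R y ^ 2) ^ k) ≤ (K ^ (d + 1) * cubeE n fun y => R y ^ 2) ^ k := by
        calc cubeE n (fun y => (K * R y ^ 2) ^ k) = K ^ k * cubeE n (fun y => R y ^ (2 * k)) := by
              simp only [mul_pow, ← pow_mul, cubeE_const_mul]
          _ ≤ K ^ k * (K ^ d * cubeE n fun y => R y ^ 2) ^ k := by gcongr; exact ih hR
          _ = _ := by rw [← mul_pow, ← mul_assoc, ← pow_succ']
      calc cubeE (n + 1) (fun x => P x ^ (2 * k))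
          = cubeE n (fun y => ((Q y + R y) ^ (2 * k) + (Q y - R y) ^ (2 * k)) / 2) := by
            rw [cubeE_succ]; congr 1; funext y; rw [(hQR y).1, (hQR y).2]
        _ ≤ cubeE n (fun y => (Q y ^ 2 + K * R y ^ 2) ^ k) :=
            cubeE_mono fun y => add_pow_two_mul_add_sub_pow_two_mul_le (Q y) (R y) k
        _ ≤ (K ^ (d + 1) * cubeE n (fun y => Q y ^ 2)
              + K ^ (d + 1) * cubeE n (fun y => R y ^ 2)) ^ k :=
            cubeE_add_pow_le hk (fun y => sq_nonneg _) (fun y => by positivity)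
              (mul_nonneg (by positivity) (cubeE_nonneg fun y => sq_nonneg (Q y)))
              (mul_nonneg (by positivity) (cubeE_nonneg fun y => sq_nonneg (R y))) hQk hRk
        _ = (K ^ (d + 1) * cubeE (n + 1) fun x => P x ^ 2) ^ k := by rw [hP2, mul_add]

lemma cubePr_mono {A B : Set (Fin n → Bool)} (h : A ⊆ B) : cubePr n A ≤ cubePr n B := by
  refine div_le_div_of_nonneg_right (sum_le_sum fun x _ => ?_) (by positivity)
  by_cases hA : x ∈ A
  · simp [hA, h hA]
  · simp only [hA, if_false]; positivity

lemma cubePr_abs_ge_le (f : (Fin n → Bool) → ℝ) (m : ℕ) {t : ℝ} (ht : 0 < t) :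
    cubePr n {x | t ≤ |f x|} ≤ cubeE n (fun x => f x ^ (2 * m)) / t ^ (2 * m) := by
  rw [cubePr, cubeE, div_right_comm]
  refine div_le_div_of_nonneg_right ?_ (by positivity)
  rw [sum_div]
  refine sum_le_sum fun x _ => ?_
  split_ifs with hx
  · rw [one_le_div (by positivity), ← (even_two_mul m).pow_abs (f x)]
    exact pow_le_pow_left₀ ht.le hx _
  · exact div_nonneg ((even_two_mul m).pow_nonneg _) (by positivity)

lemma cubePr_abs_ge_lt_of_cubeE_pow_le {f : (Fin n → Bool) → ℝ} {m : ℕ} (hm : m ≠ 0)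
    {p M t : ℝ} (hp : 0 < p) (hM : 0 ≤ M) (hMt : M < t)
    (hf : cubeE n (fun x => f x ^ (2 * m)) ≤ p * M ^ (2 * m)) :
    cubePr n {x | t ≤ |f x|} < p := by
  have ht : 0 < t ^ (2 * m) := pow_pos (hM.trans_lt hMt) _
  calc cubePr n {x | t ≤ |f x|} ≤ cubeE n (fun x => f x ^ (2 * m)) / t ^ (2 * m) :=
        cubePr_abs_ge_le f m (hM.trans_lt hMt)
    _ ≤ p * M ^ (2 * m) / t ^ (2 * m) := by gcongr
    _ < p := by
      rw [div_lt_iff₀ ht]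
      exact mul_lt_mul_of_pos_left (pow_lt_pow_left₀ hMt hM (by omega)) hp

variable {r a : ℝ}

lemma IsQuantile.le_of_cubeE_pow_le (hq : IsQuantile n P r a) {m : ℕ} (hm : m ≠ 0) {M : ℝ}
    (hM : 0 ≤ M) (hP : cubeE n (fun x => P x ^ (2 * m)) ≤ Real.exp (-r) * M ^ (2 * m)) :
    a ≤ M := by
  refine le_of_forall_gt_imp_ge_of_dense fun t hMt => le_of_not_gt fun hta => ?_
  have htail := cubePr_abs_ge_lt_of_cubeE_pow_le hm (Real.exp_pos _) hM hMt hP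
  have hsub : {x | a ≤ P x} ⊆ {x | t ≤ |P x|} := fun x hx => hta.le.trans (hx.trans (le_abs_self _))
  exact (hq.1.trans (cubePr_mono hsub)).not_gt htail

lemma IsQuantile.neg_le_of_cubeE_pow_le (hq : IsQuantile n P r a) (hr : 0 < r) {m : ℕ}
    (hm : m ≠ 0) {M : ℝ} (hM : 0 ≤ M)
    (hP : cubeE n (fun x => P x ^ (2 * m)) ≤ (1 - Real.exp (-r)) * M ^ (2 * m)) :
    -M ≤ a := by
  refine neg_le.2 (le_of_forall_gt_imp_ge_of_dense fun t hMt => le_of_not_gt fun hat => ?_)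
  have htail := cubePr_abs_ge_lt_of_cubeE_pow_le hm
    (sub_pos.2 (Real.exp_lt_one_iff.2 (neg_lt_zero.2 hr))) hM hMt hP
  have hsub : {x | P x ≤ a} ⊆ {x | t ≤ |P x|} := fun x (hx : P x ≤ a) =>
    show t ≤ |P x| by linarith [neg_abs_le (P x)]
  exact (hq.2.trans (cubePr_mono hsub)).not_gt htail

end Cube

lemma two_mul_pow_mul_sq_pow_le_exp_neg_mul_pow {d k : ℕ} (hd : 0 < d) {r : ℝ} (hr : 0 ≤ r)
    (hk₁ : r / d ≤ k) (hk₂ : k ≤ r / d + 2) (s : ℝ) :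
    ((2 * k) ^ d * s ^ 2) ^ k
      ≤ Real.exp (-r) * (8 ^ d * (r / d + 1) ^ ((d : ℝ) / 2) * s) ^ (2 * k) := by
  set ρ := r / d
  have hρ : 0 ≤ ρ := by positivity
  have hw : ((ρ + 1) ^ ((d : ℝ) / 2)) ^ (2 * k) = (ρ + 1) ^ (d * k) := by
    rw [← Real.rpow_natCast, ← Real.rpow_mul (by positivity), ← Real.rpow_natCast]
    push_cast; ring_nf
  have hexp : 1 ≤ Real.exp (-r) * Real.exp 1 ^ (d * k) := by
    rw [← Real.exp_nat_mul, mul_one, ← Real.exp_add]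
    refine Real.one_le_exp ?_
    have : r ≤ d * k := by rw [← div_le_iff₀' (by positivity)]; exact hk₁
    push_cast; linarith
  have h64 : ((8 : ℝ) ^ d) ^ (2 * k) = 64 ^ (d * k) := by
    rw [← pow_mul, show d * (2 * k) = 2 * (d * k) by ring, pow_mul]; norm_num
  have hbase : 2 * k * Real.exp 1 ≤ 64 * (ρ + 1) := by
    nlinarith [Real.exp_one_lt_d9, Real.exp_pos 1]
  calc ((2 * k) ^ d * s ^ 2) ^ k = (2 * k) ^ (d * k) * (s ^ 2) ^ k * 1 := by ring
    _ ≤ (2 * k) ^ (d * k) * (s ^ 2) ^ k * (Real.exp (-r) * Real.exp 1 ^ (d * k)) := by gcongr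
    _ = Real.exp (-r) * (2 * k * Real.exp 1) ^ (d * k) * (s ^ 2) ^ k := by ring
    _ ≤ Real.exp (-r) * (64 * (ρ + 1)) ^ (d * k) * (s ^ 2) ^ k := by gcongr
    _ = Real.exp (-r) * (8 ^ d * (ρ + 1) ^ ((d : ℝ) / 2) * s) ^ (2 * k) := by
      rw [mul_pow _ s, mul_pow (8 ^ d : ℝ), hw, h64, mul_pow (64 : ℝ)]; ring

lemma eight_pow_add_two_le_ten_pow {d : ℕ} (hd : d ≠ 0) : (8 : ℝ) ^ d + 2 ≤ 10 ^ d := by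
  have h := pow_add_pow_le (by norm_num : (0 : ℝ) ≤ 8) (by norm_num : (0 : ℝ) ≤ 2) hd
  norm_num at h
  linarith [le_self_pow₀ (by norm_num : (1 : ℝ) ≤ 2) hd]

/-- Tail bound: `a_r - a_1 ≤ C^d (r/d + 1)^{d/2} ‖P(X)‖₂` for all `r ≥ 1`. -/
theorem tail_bound :
    ∃ C : ℝ, 0 < C ∧
      ∀ (n d : ℕ), 1 ≤ n → 1 ≤ d →
        ∀ P : (Fin n → Bool) → ℝ, IsPolyDeg n d P →
          ∀ r : ℝ, 1 ≤ r →
            ∀ ar a1 : ℝ, IsQuantile n P r ar → IsQuantile n P 1 a1 →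
              ar - a1 ≤
                C ^ d * (r / (d : ℝ) + 1) ^ ((d : ℝ) / 2) *
                  Real.sqrt (cubeE n fun x => (P x) ^ 2) := by
  refine ⟨10, by norm_num, fun n d _ hd P hP r hr ar a1 hqr hq1 => ?_⟩
  set s := Real.sqrt (cubeE n fun x => P x ^ 2)
  set w := (r / d + 1) ^ ((d : ℝ) / 2)
  have hs : 0 ≤ s := Real.sqrt_nonneg _
  have hE : cubeE n (fun x => P x ^ 2) = s ^ 2 :=
    (Real.sq_sqrt (cubeE_nonneg fun x => sq_nonneg _)).symm
  have hw : 1 ≤ w := Real.one_le_rpow (le_add_of_nonneg_left (by positivity)) (by positivity)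
  set k := ⌈r / d⌉₊ + 1
  have hk : r / d ≤ k ∧ (k : ℝ) ≤ r / d + 2 := by
    have := Nat.ceil_lt_add_one (show 0 ≤ r / d by positivity)
    have := Nat.le_ceil (r / d)
    push_cast [k]; constructor <;> linarith
  have hupper : ar ≤ 8 ^ d * w * s := by
    refine hqr.le_of_cubeE_pow_le (m := k) (by omega) (by positivity) ?_
    calc cubeE n (fun x => P x ^ (2 * k)) ≤ ((2 * k) ^ d * s ^ 2) ^ k := by
          rw [← hE]; exact hP.cubeE_pow_two_mul_le (by omega)
      _ ≤ _ := two_mul_pow_mul_sq_pow_le_exp_neg_mul_pow hd (by linarith) hk.1 hk.2 s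
  have hlower : -(2 * s) ≤ a1 := by
    refine hq1.neg_le_of_cubeE_pow_le one_pos one_ne_zero (by positivity) ?_
    rw [mul_one, hE]
    nlinarith [Real.exp_neg_one_lt_half]
  calc ar - a1 ≤ 8 ^ d * w * s + 2 * s := by linarith
    _ ≤ (8 ^ d + 2) * w * s := by nlinarith
    _ ≤ 10 ^ d * w * s := by gcongr; exact eight_pow_add_two_le_ten_pow (by omega)
end

section
/- Let n ≥ 1, d ≥ 1, let X be uniformly distributed on {-1,1}^n, and let P be a polynomial of degree at most d on {-1,1}^n with E P(X) = 0. Set σ_- = (E[(max(-P(X),0))^2])^{1/2} and σ_+ = (E[(max(P(X),0))^2])^{1/2}. If σ_+ < σ_-, then E[max(P(X),0)] = E[max(-P(X),0)] ≥ σ_-^3 / (2 · 3^d · (σ_+^2 + σ_-^2)), and consequently σ_+ ≥ σ_- / (4 · 3^d). -/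
open Classical

/-!
Bonami's inequality `𝔼 P⁴ ≤ 9ᵈ (𝔼 P²)²` for polynomials of degree at most `d` goes by induction
on the set of variables: splitting off one variable, `P = G + xⱼ H` with `G`, `H` independent of
`xⱼ` and `deg H < d`, the odd powers of `xⱼ` average out, and Cauchy–Schwarz on `𝔼 G²H²` closes
the induction.

For the negative part `u = max (-P) 0`, two Cauchy–Schwarz steps interpolate the moments,
`(𝔼 u²)³ ≤ (𝔼 u)² 𝔼 u⁴`, and `𝔼 u⁴ ≤ 𝔼 P⁴ ≤ 9ᵈ (σ₊² + σ₋²)²`; hence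
`σ₋³ ≤ 3ᵈ (σ₊² + σ₋²) 𝔼 P₋`. As `𝔼 P = 0`, `𝔼 P₋ = 𝔼 P₊ ≤ σ₊`, and with `σ₊ < σ₋` this gives
`σ₋ ≤ 2 · 3ᵈ σ₊`.
-/

open Finset
open scoped BigOperators

section Cube

variable {ι : Type*}

def walsh (S : Finset ι) (x : ι → Bool) : ℝ := ∏ i ∈ S, cubeSign (x i)

def cubePolys (J : Finset ι) (d : ℕ) : Submodule ℝ ((ι → Bool) → ℝ) :=
  Submodule.span ℝ (walsh '' {S | S ⊆ J ∧ #S ≤ d})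

lemma exists_const_of_mem_cubePolys_empty {d : ℕ} {f : (ι → Bool) → ℝ}
    (hf : f ∈ cubePolys ∅ d) : ∃ c, f = fun _ => c := by
  have hgen : walsh '' {S : Finset ι | S ⊆ ∅ ∧ #S ≤ d} = {1} := by
    have hwalsh : walsh (∅ : Finset ι) = 1 := funext fun _ => prod_empty
    ext g
    simp [eq_comm, hwalsh]
  rw [cubePolys, hgen, Submodule.mem_span_singleton] at hf
  obtain ⟨c, rfl⟩ := hf
  exact ⟨c, by ext; simp⟩

lemma cubePolys_zero_eq (J : Finset ι) : cubePolys J 0 = cubePolys ∅ 0 := by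
  have hgen : ∀ J : Finset ι, {S : Finset ι | S ⊆ J ∧ #S ≤ 0} = {∅} := by
    intro J
    ext S
    simp +contextual
  rw [cubePolys, cubePolys, hgen, hgen]

lemma cubeSign_not (b : Bool) : cubeSign (!b) = -cubeSign b := by
  cases b <;> simp [cubeSign]

lemma cubeSign_sq (b : Bool) : cubeSign b ^ 2 = 1 := by
  cases b <;> simp [cubeSign]

variable [DecidableEq ι]

def flipAt (j : ι) (x : ι → Bool) : ι → Bool := Function.update x j (!x j)

lemma flipAt_involutive (j : ι) : Function.Involutive (flipAt j) := by
  intro x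
  simp [flipAt]

lemma expect_cubeSign_mul_eq_zero [Fintype ι] {j : ι} {K : (ι → Bool) → ℝ}
    (hK : ∀ x, K (flipAt j x) = K x) : 𝔼 x, cubeSign (x j) * K x = 0 := by
  have h : 𝔼 x, cubeSign (x j) * K x = 𝔼 x, -(cubeSign (x j) * K x) :=
    Fintype.expect_equiv (flipAt_involutive j).toPerm _ _ fun x => by
      rw [Function.Involutive.coe_toPerm, hK, flipAt, Function.update_self, cubeSign_not]
      ring
  rw [expect_neg_distrib] at h
  linarith

lemma walsh_flipAt {j : ι} {S : Finset ι} (hj : j ∉ S) (x : ι → Bool) :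
    walsh S (flipAt j x) = walsh S x :=
  prod_congr rfl fun i hi => by
    rw [flipAt, Function.update_of_ne (ne_of_mem_of_not_mem hi hj)]

lemma flipAt_invariant_of_mem_cubePolys {J : Finset ι} {d : ℕ} {j : ι} (hj : j ∉ J)
    {f : (ι → Bool) → ℝ} (hf : f ∈ cubePolys J d) (x : ι → Bool) : f (flipAt j x) = f x := by
  induction hf using Submodule.span_induction generalizing x with
  | mem g hg =>
    obtain ⟨S, ⟨hSJ, -⟩, rfl⟩ := hg
    exact walsh_flipAt (fun h => hj (hSJ h)) x
  | zero => rfl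
  | add g h _ _ hg hh => simp [hg, hh]
  | smul c g _ hg => simp [hg]

lemma exists_eq_add_cubeSign_mul_of_mem_cubePolys_insert {J : Finset ι} {j : ι} (hj : j ∉ J)
    {d : ℕ} {f : (ι → Bool) → ℝ} (hf : f ∈ cubePolys (insert j J) (d + 1)) :
    ∃ G ∈ cubePolys J (d + 1), ∃ H ∈ cubePolys J d, f = fun x => G x + cubeSign (x j) * H x := by
  induction hf using Submodule.span_induction with
  | mem g hg =>
    obtain ⟨S, ⟨hSJ, hSd⟩, rfl⟩ := hg
    by_cases hjS : j ∈ S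
    · refine ⟨0, zero_mem _, walsh (S.erase j),
        Submodule.subset_span ⟨S.erase j, ⟨?_, ?_⟩, rfl⟩, ?_⟩
      · simpa [hj] using erase_subset_erase j hSJ
      · rw [card_erase_of_mem hjS]; omega
      · ext x
        simpa [walsh] using (mul_prod_erase S (fun i => cubeSign (x i)) hjS).symm
    · have hSJ' : S ⊆ J := (subset_insert_iff_of_notMem hjS).mp hSJ
      exact ⟨walsh S, Submodule.subset_span ⟨S, ⟨hSJ', hSd⟩, rfl⟩, 0, zero_mem _, by ext; simp⟩
  | zero => exact ⟨0, zero_mem _, 0, zero_mem _, by ext; simp⟩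
  | add f₁ f₂ _ _ h₁ h₂ =>
    obtain ⟨G₁, hG₁, H₁, hH₁, rfl⟩ := h₁
    obtain ⟨G₂, hG₂, H₂, hH₂, rfl⟩ := h₂
    exact ⟨G₁ + G₂, add_mem hG₁ hG₂, H₁ + H₂, add_mem hH₁ hH₂, by ext; simp; ring⟩
  | smul c g _ h =>
    obtain ⟨G, hG, H, hH, rfl⟩ := h
    exact ⟨c • G, Submodule.smul_mem _ c hG, c • H, Submodule.smul_mem _ c hH, by ext; simp; ring⟩

end Cube

section Bonami

variable {ι : Type*} [Fintype ι] [DecidableEq ι]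

lemma expect_sq_add_cubeSign_mul {j : ι} {G H : (ι → Bool) → ℝ}
    (hG : ∀ x, G (flipAt j x) = G x) (hH : ∀ x, H (flipAt j x) = H x) :
    𝔼 x, (G x + cubeSign (x j) * H x) ^ 2 = 𝔼 x, G x ^ 2 + 𝔼 x, H x ^ 2 := by
  calc 𝔼 x, (G x + cubeSign (x j) * H x) ^ 2
      = 𝔼 x, ((G x ^ 2 + H x ^ 2) + cubeSign (x j) * (2 * G x * H x)) :=
        expect_congr rfl fun x _ => by linear_combination H x ^ 2 * cubeSign_sq (x j)
    _ = 𝔼 x, G x ^ 2 + 𝔼 x, H x ^ 2 := by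
        rw [expect_add_distrib, expect_cubeSign_mul_eq_zero (by simp [hG, hH]), add_zero,
          expect_add_distrib]

lemma expect_pow_four_add_cubeSign_mul {j : ι} {G H : (ι → Bool) → ℝ}
    (hG : ∀ x, G (flipAt j x) = G x) (hH : ∀ x, H (flipAt j x) = H x) :
    𝔼 x, (G x + cubeSign (x j) * H x) ^ 4
      = 𝔼 x, G x ^ 4 + 6 * 𝔼 x, G x ^ 2 * H x ^ 2 + 𝔼 x, H x ^ 4 := by
  calc 𝔼 x, (G x + cubeSign (x j) * H x) ^ 4
      = 𝔼 x, ((G x ^ 4 + 6 * (G x ^ 2 * H x ^ 2) + H x ^ 4)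
          + cubeSign (x j) * (4 * G x ^ 3 * H x + 4 * G x * H x ^ 3)) :=
        expect_congr rfl fun x _ => by
          linear_combination (6 * G x ^ 2 * H x ^ 2 + 4 * cubeSign (x j) * G x * H x ^ 3
            + H x ^ 4 * (cubeSign (x j) ^ 2 + 1)) * cubeSign_sq (x j)
    _ = 𝔼 x, G x ^ 4 + 6 * 𝔼 x, G x ^ 2 * H x ^ 2 + 𝔼 x, H x ^ 4 := by
        rw [expect_add_distrib, expect_cubeSign_mul_eq_zero (by simp [hG, hH]), add_zero,
          expect_add_distrib, expect_add_distrib, mul_expect]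

lemma add_six_mul_add_le_of_sq_le_mul {X Y Z g h q : ℝ} (hq : 0 ≤ q) (hg : 0 ≤ g) (hh : 0 ≤ h)
    (hZ0 : 0 ≤ Z) (hX : X ≤ 9 * q * g ^ 2) (hZ : Z ≤ q * h ^ 2)
    (hY : Y ^ 2 ≤ X * Z) : X + 6 * Y + Z ≤ 9 * q * (g + h) ^ 2 := by
  have hXZ : X * Z ≤ (3 * q * g * h) ^ 2 := by
    calc X * Z ≤ (9 * q * g ^ 2) * (q * h ^ 2) := mul_le_mul hX hZ hZ0 (by positivity)
      _ = (3 * q * g * h) ^ 2 := by ring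
  have hY' : Y ≤ 3 * q * g * h :=
    (le_abs_self Y).trans (abs_le_of_sq_le_sq (hY.trans hXZ) (by positivity))
  nlinarith [mul_nonneg hq (sq_nonneg h), mul_nonneg (mul_nonneg hq hg) hh]

theorem expect_pow_four_le_of_mem_cubePolys {J : Finset ι} {d : ℕ} {f : (ι → Bool) → ℝ}
    (hf : f ∈ cubePolys J d) : 𝔼 x, f x ^ 4 ≤ 9 ^ d * (𝔼 x, f x ^ 2) ^ 2 := by
  induction J using Finset.induction_on generalizing d f with
  | empty =>
    obtain ⟨c, rfl⟩ := exists_const_of_mem_cubePolys_empty hf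
    simp only [Fintype.expect_const]
    calc c ^ 4 = 1 * (c ^ 2) ^ 2 := by ring
      _ ≤ 9 ^ d * (c ^ 2) ^ 2 := by gcongr; exact one_le_pow₀ (by norm_num)
  | insert j J hj ih =>
    cases d with
    | zero => exact ih (by rwa [cubePolys_zero_eq] at hf ⊢)
    | succ d =>
      obtain ⟨G, hG, H, hH, rfl⟩ := exists_eq_add_cubeSign_mul_of_mem_cubePolys_insert hj hf
      have hGj := flipAt_invariant_of_mem_cubePolys hj hG
      have hHj := flipAt_invariant_of_mem_cubePolys hj hH
      have hCS : (𝔼 x, G x ^ 2 * H x ^ 2) ^ 2 ≤ (𝔼 x, G x ^ 4) * 𝔼 x, H x ^ 4 := by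
        have h := expect_mul_sq_le_sq_mul_sq univ (G · ^ 2) (H · ^ 2)
        simp only [← pow_mul] at h
        exact h
      have hGd := ih hG
      rw [pow_succ'] at hGd
      rw [expect_pow_four_add_cubeSign_mul hGj hHj, expect_sq_add_cubeSign_mul hGj hHj, pow_succ']
      exact add_six_mul_add_le_of_sq_le_mul (by positivity) (expect_nonneg fun x _ => by positivity)
        (expect_nonneg fun x _ => by positivity) (expect_nonneg fun x _ => by positivity)
        hGd (ih hH) hCS

end Bonami

lemma mem_cubePolys_univ_of_isPolyDeg {n d : ℕ} {P : (Fin n → Bool) → ℝ} (hP : IsPolyDeg n d P) :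
    P ∈ cubePolys univ d := by
  obtain ⟨a, ha, hPa⟩ := hP
  have hsum : P = ∑ S, a S • walsh S := by
    ext x
    simp [hPa, walsh]
  rw [hsum]
  refine Submodule.sum_mem _ fun S _ => ?_
  by_cases hS : d < #S
  · simp [ha S hS]
  · exact Submodule.smul_mem _ _ (Submodule.subset_span ⟨S, ⟨subset_univ S, not_lt.mp hS⟩, rfl⟩)

lemma cubeE_eq_expect (n : ℕ) (f : (Fin n → Bool) → ℝ) : cubeE n f = 𝔼 x, f x := by
  simp [cubeE, Fintype.expect_eq_sum_div_card]

section Moments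

variable {α : Type*} [Fintype α]

lemma sq_expect_le_expect_mul_expect {r f g : α → ℝ} (hf : ∀ x, 0 ≤ f x) (hg : ∀ x, 0 ≤ g x)
    (hrfg : ∀ x, r x ^ 2 ≤ f x * g x) : (𝔼 x, r x) ^ 2 ≤ (𝔼 x, f x) * 𝔼 x, g x := by
  simp only [Fintype.expect_eq_sum_div_card, div_pow, div_mul_div_comm, ← sq]
  gcongr
  exact sum_sq_le_sum_mul_sum_of_sq_le_mul univ (fun x _ => hf x) (fun x _ => hg x)
    fun x _ => hrfg x

lemma expect_sq_pow_three_le {u : α → ℝ} (hu : ∀ x, 0 ≤ u x) :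
    (𝔼 x, u x ^ 2) ^ 3 ≤ (𝔼 x, u x) ^ 2 * 𝔼 x, u x ^ 4 := by
  have h₁ : (𝔼 x, u x ^ 2) ^ 2 ≤ (𝔼 x, u x) * 𝔼 x, u x ^ 3 :=
    sq_expect_le_expect_mul_expect hu (fun x => pow_nonneg (hu x) 3) fun x => (by ring : _ = _).le
  have h₂ : (𝔼 x, u x ^ 3) ^ 2 ≤ (𝔼 x, u x ^ 2) * 𝔼 x, u x ^ 4 :=
    sq_expect_le_expect_mul_expect (fun x => sq_nonneg _) (fun x => pow_nonneg (hu x) 4)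
      fun x => (by ring : _ = _).le
  set m₁ := 𝔼 x, u x
  set m₂ := 𝔼 x, u x ^ 2
  set m₃ := 𝔼 x, u x ^ 3
  set m₄ := 𝔼 x, u x ^ 4
  have hm₁ : 0 ≤ m₁ := expect_nonneg fun x _ => hu x
  have hm₂ : 0 ≤ m₂ := expect_nonneg fun x _ => sq_nonneg (u x)
  have hm₄ : 0 ≤ m₄ := expect_nonneg fun x _ => pow_nonneg (hu x) 4
  rcases hm₂.eq_or_lt with h0 | hpos
  · rw [← h0, zero_pow three_ne_zero]; positivity
  · refine le_of_mul_le_mul_left ?_ hpos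
    calc m₂ * m₂ ^ 3 = (m₂ ^ 2) ^ 2 := by ring
      _ ≤ (m₁ * m₃) ^ 2 := by gcongr
      _ = m₁ ^ 2 * m₃ ^ 2 := by ring
      _ ≤ m₁ ^ 2 * (m₂ * m₄) := by gcongr
      _ = m₂ * (m₁ ^ 2 * m₄) := by ring

lemma expect_le_sqrt_expect_sq [Nonempty α] (f : α → ℝ) : 𝔼 x, f x ≤ √(𝔼 x, f x ^ 2) :=
  Real.le_sqrt_of_sq_le <| by
    simpa using sq_expect_le_expect_mul_expect (r := f) (fun x => sq_nonneg (f x))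
      (fun _ => zero_le_one) fun x => (mul_one _).ge

lemma expect_sq_eq_expect_posPart_sq_add_expect_negPart_sq (f : α → ℝ) :
    𝔼 x, f x ^ 2 = 𝔼 x, max (f x) 0 ^ 2 + 𝔼 x, max (-f x) 0 ^ 2 := by
  rw [← expect_add_distrib]
  exact expect_congr rfl fun x _ => by rcases le_total (f x) 0 with h | h <;> simp [h]

lemma expect_posPart_eq_expect_negPart {f : α → ℝ} (hf : 𝔼 x, f x = 0) :
    𝔼 x, max (f x) 0 = 𝔼 x, max (-f x) 0 := by
  rw [← sub_eq_zero, ← expect_sub_distrib]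
  simpa only [max_zero_sub_max_neg_zero_eq_self] using hf

lemma sqrt_expect_negPart_sq_pow_three_le {f : α → ℝ} {K : ℝ} (hK : 0 ≤ K)
    (hf : 𝔼 x, f x ^ 4 ≤ K ^ 2 * (𝔼 x, f x ^ 2) ^ 2) :
    √(𝔼 x, max (-f x) 0 ^ 2) ^ 3 ≤ K * (𝔼 x, f x ^ 2) * 𝔼 x, max (-f x) 0 := by
  have hneg4 : 𝔼 x, max (-f x) 0 ^ 4 ≤ 𝔼 x, f x ^ 4 :=
    expect_le_expect fun x _ => by
      rcases le_total (f x) 0 with h | h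
      · rw [max_eq_left (neg_nonneg.mpr h), Even.neg_pow (by decide)]
      · rw [max_eq_right (neg_nonpos.mpr h), zero_pow four_ne_zero]; positivity
  have hneg := expect_sq_pow_three_le fun x => le_max_right (-f x) 0
  refine (pow_le_pow_iff_left₀ (by positivity) (by positivity) two_ne_zero).mp ?_
  calc (√(𝔼 x, max (-f x) 0 ^ 2) ^ 3) ^ 2 = (𝔼 x, max (-f x) 0 ^ 2) ^ 3 := by
        rw [← pow_mul, mul_comm, pow_mul, Real.sq_sqrt (expect_nonneg fun x _ => sq_nonneg _)]
    _ ≤ (𝔼 x, max (-f x) 0) ^ 2 * 𝔼 x, f x ^ 4 := hneg.trans (by gcongr)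
    _ ≤ (𝔼 x, max (-f x) 0) ^ 2 * (K ^ 2 * (𝔼 x, f x ^ 2) ^ 2) := by gcongr
    _ = (K * (𝔼 x, f x ^ 2) * 𝔼 x, max (-f x) 0) ^ 2 := by ring

end Moments

theorem negative_part_estimate_general (n d : ℕ)
    (P : (Fin n → Bool) → ℝ) (hP : IsPolyDeg n d P) (hmean : cubeE n P = 0)
    (σp σm : ℝ)
    (hσp : σp = Real.sqrt (cubeE n fun x => (max (P x) 0) ^ 2))
    (hσm : σm = Real.sqrt (cubeE n fun x => (max (-P x) 0) ^ 2))
    (hlt : σp < σm) :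
    (cubeE n (fun x => max (P x) 0) = cubeE n (fun x => max (-P x) 0) ∧
      σm ^ 3 / (2 * 3 ^ d * (σp ^ 2 + σm ^ 2)) ≤ cubeE n (fun x => max (-P x) 0)) ∧
      σm / (4 * 3 ^ d) ≤ σp := by
  simp only [cubeE_eq_expect] at hmean hσp hσm ⊢
  set A := 𝔼 x, max (-P x) 0
  have hσp0 : 0 ≤ σp := hσp ▸ Real.sqrt_nonneg _
  have hσm0 : 0 < σm := hσp0.trans_lt hlt
  have hσ2 : 𝔼 x, P x ^ 2 = σp ^ 2 + σm ^ 2 := by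
    rw [hσp, hσm, Real.sq_sqrt (expect_nonneg fun x _ => sq_nonneg _),
      Real.sq_sqrt (expect_nonneg fun x _ => sq_nonneg _),
      expect_sq_eq_expect_posPart_sq_add_expect_negPart_sq]
  have hbonami : 𝔼 x, P x ^ 4 ≤ (3 ^ d) ^ 2 * (𝔼 x, P x ^ 2) ^ 2 := by
    have h9 : (9 : ℝ) ^ d = (3 ^ d) ^ 2 := by rw [← pow_mul, mul_comm, pow_mul]; norm_num
    exact h9 ▸ expect_pow_four_le_of_mem_cubePolys (mem_cubePolys_univ_of_isPolyDeg hP)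
  have hkey : σm ^ 3 ≤ 3 ^ d * (σp ^ 2 + σm ^ 2) * A := by
    simpa only [← hσm, hσ2] using sqrt_expect_negPart_sq_pow_three_le (by positivity) hbonami
  have hpos_eq : 𝔼 x, max (P x) 0 = A := expect_posPart_eq_expect_negPart hmean
  have hA_le : A ≤ σp := hpos_eq ▸ hσp ▸ expect_le_sqrt_expect_sq _
  have hσm_le : σm ≤ 2 * 3 ^ d * σp := by
    refine le_of_mul_le_mul_left ?_ (pow_pos hσm0 2)
    calc σm ^ 2 * σm = σm ^ 3 := by ring
      _ ≤ 3 ^ d * (σp ^ 2 + σm ^ 2) * A := hkey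
      _ ≤ 3 ^ d * (σm ^ 2 + σm ^ 2) * σp := by gcongr
      _ = σm ^ 2 * (2 * 3 ^ d * σp) := by ring
  refine ⟨⟨hpos_eq, ?_⟩, ?_⟩
  · rw [div_le_iff₀ (by positivity)]
    nlinarith
  · rw [div_le_iff₀ (by positivity)]
    nlinarith

/-- If `σ₊ < σ₋` for a centered degree-`d` polynomial, then
`E P₊ = E P₋ ≥ σ₋³ / (2 · 3^d (σ₊² + σ₋²))` and consequently `σ₊ ≥ σ₋ / (4 · 3^d)`. -/
theorem negative_part_estimate (n d : ℕ) (hn : 1 ≤ n) (hd : 1 ≤ d)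
    (P : (Fin n → Bool) → ℝ) (hP : IsPolyDeg n d P) (hmean : cubeE n P = 0)
    (σp σm : ℝ)
    (hσp : σp = Real.sqrt (cubeE n fun x => (max (P x) 0) ^ 2))
    (hσm : σm = Real.sqrt (cubeE n fun x => (max (-P x) 0) ^ 2))
    (hlt : σp < σm) :
    (cubeE n (fun x => max (P x) 0) = cubeE n (fun x => max (-P x) 0) ∧
      σm ^ 3 / (2 * 3 ^ d * (σp ^ 2 + σm ^ 2)) ≤ cubeE n (fun x => max (-P x) 0)) ∧
      σm / (4 * 3 ^ d) ≤ σp :=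
  negative_part_estimate_general n d P hP hmean σp σm hσp hσm hlt
end
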